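/- Structural cut for simulated bang atoms: for any atom p, atomic multiset K, base B ⊇ N, and φ ∈ Ξ, the following are equivalent: (1) (!φ)^♭ ⊎ K ⊢_B p; (2) for all C ⊇ B, if ⊢_C φ^♭ (derivable with empty context) then K ⊢_C p. -/

import Mathlib

abbrev Atom := ℕ
abbrev ASeq := Multiset Atom × Atom
abbrev Box := Multiset ASeq
abbrev ARule := Multiset Box × Box × Atom
abbrev Base := Set ARule

/-- An atom `d` is persistent in `B` if there is a rule `⟨∅, S, d⟩ ∈ B` with `S` nonempty. -/
def Persistent (B : Base) (d : Atom) : Prop :=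
  ∃ S : Box, S ≠ 0 ∧ ((0 : Multiset Box), S, d) ∈ B

/-- Atomic derivability in a base. -/
inductive Deriv (B : Base) : Multiset Atom → Atom → Prop
  | ref (p : Atom) : Deriv B {p} p
  | app (S : Box) (p : Atom)
      (bc : List (Box × Multiset Atom))
      (dc : List (Atom × Multiset Atom))
      (hrule : ((↑(bc.map Prod.fst) : Multiset Box), S, p) ∈ B)
      (hpers : ∀ x ∈ dc, Persistent B x.1)
      (hbox : ∀ x ∈ bc, ∀ s ∈ x.1, Deriv B (x.2 + s.1) s.2)
      (hd : ∀ x ∈ dc, Deriv B x.2 x.1)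
      (hS : ∀ s ∈ S, Deriv B ((↑(dc.map Prod.fst) : Multiset Atom) + s.1) s.2) :
      Deriv B ((bc.map Prod.snd).sum + (dc.map Prod.snd).sum) p

/-- Formulas of intuitionistic linear logic. -/
inductive Fml : Type
  | atom : Atom → Fml
  | top : Fml
  | zero : Fml
  | one : Fml
  | limp : Fml → Fml → Fml
  | tens : Fml → Fml → Fml
  | wth : Fml → Fml → Fml
  | plus : Fml → Fml → Fml
  | bang : Fml → Fml
deriving DecidableEq

/-- The degree of a formula. -/
def deg : Fml → ℕ
  | .atom _ => 1
  | .top => 2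
  | .zero => 2
  | .one => 2
  | .limp φ ψ => deg φ + deg ψ + 1
  | .tens φ ψ => deg φ + deg ψ + 1
  | .wth φ ψ => deg φ + deg ψ + 1
  | .plus φ ψ => deg φ + deg ψ + 1
  | .bang φ => deg φ + 1

theorem one_le_deg (φ : Fml) : 1 ≤ deg φ := by
  cases φ <;> simp [deg] <;> omega

mutual
  /-- Support `⊩_B^L φ` (empty left-hand side). -/
  def Supp : Base → Multiset Atom → Fml → Prop
    | B, L, .atom p => Deriv B L p
    | _, _, .top => True
    | B, L, .zero => ∀ (K : Multiset Atom) (p : Atom), Supp B (L + K) (.atom p)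
    | B, L, .one => ∀ C : Base, B ⊆ C → ∀ (K : Multiset Atom) (p : Atom),
        Supp C K (.atom p) → Supp C (L + K) (.atom p)
    | B, L, .limp φ ψ => SuppInf1 B L φ ψ
    | B, L, .tens φ ψ => ∀ C : Base, B ⊆ C → ∀ (K : Multiset Atom) (p : Atom),
        SuppInf2 C K φ ψ (.atom p) → Supp C (L + K) (.atom p)
    | B, L, .wth φ ψ => Supp B L φ ∧ Supp B L ψ
    | B, L, .plus φ ψ => ∀ C : Base, B ⊆ C → ∀ (K : Multiset Atom) (p : Atom),
        SuppInf1 C K φ (.atom p) → SuppInf1 C K ψ (.atom p) → Supp C (L + K) (.atom p)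
    | B, L, .bang φ => ∀ C : Base, B ⊆ C → ∀ (K : Multiset Atom) (p : Atom),
        (∀ D : Base, C ⊆ D → Supp D 0 φ → Supp D K (.atom p)) → Supp C (L + K) (.atom p)
  termination_by B L φ => 2 * deg φ
  decreasing_by
    all_goals
      try simp only [deg]
      try have h1 := one_le_deg φ
      try have h2 := one_le_deg ψ
      try have h3 := one_le_deg χ
      try have h4 := one_le_deg α
      try have h5 := one_le_deg β
      omega

  /-- The (Inf) clause for a singleton context `{φ} ⊩_B^L χ`. -/
  def SuppInf1 : Base → Multiset Atom → Fml → Fml → Prop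
    | B, L, .bang α, χ => ∀ C : Base, B ⊆ C → Supp C 0 α → Supp C L χ
    | B, L, φ, χ => ∀ C : Base, B ⊆ C → ∀ K : Multiset Atom,
        Supp C K φ → Supp C (L + K) χ
  termination_by B L φ χ => 2 * (deg φ + deg χ) - 1
  decreasing_by
    all_goals
      try simp only [deg]
      try have h1 := one_le_deg φ
      try have h2 := one_le_deg ψ
      try have h3 := one_le_deg χ
      try have h4 := one_le_deg α
      try have h5 := one_le_deg β
      omega

  /-- The (Inf) clause for a two-element context `{φ, ψ} ⊩_B^L χ`. -/
  def SuppInf2 : Base → Multiset Atom → Fml → Fml → Fml → Prop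
    | B, L, .bang α, .bang β, χ => ∀ C : Base, B ⊆ C →
        Supp C 0 α → Supp C 0 β → Supp C L χ
    | B, L, .bang α, ψ, χ => ∀ C : Base, B ⊆ C → ∀ K : Multiset Atom,
        Supp C 0 α → Supp C K ψ → Supp C (L + K) χ
    | B, L, φ, .bang β, χ => ∀ C : Base, B ⊆ C → ∀ K : Multiset Atom,
        Supp C 0 β → Supp C K φ → Supp C (L + K) χ
    | B, L, φ, ψ, χ => ∀ C : Base, B ⊆ C → ∀ K₁ K₂ : Multiset Atom,
        Supp C K₁ φ → Supp C K₂ ψ → Supp C (L + K₁ + K₂) χ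
  termination_by B L φ ψ χ => 2 * (deg φ + deg ψ + deg χ) - 1
  decreasing_by
    all_goals
      try simp only [deg]
      try have h1 := one_le_deg φ
      try have h2 := one_le_deg ψ
      try have h3 := one_le_deg χ
      try have h4 := one_le_deg α
      try have h5 := one_le_deg β
      omega
end

/-- Is the formula a `!`-formula? -/
def isBang : Fml → Bool
  | .bang _ => true
  | _ => false

/-- Strip a top-level `!`. -/
def unbang : Fml → Fml
  | .bang φ => φ
  | φ => φ

/-- Support for a multiset of formulas: the `(⊎)` clause. -/
def SuppMS (B : Base) (L : Multiset Atom) (Γ : Multiset Fml) : Prop :=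
  ∃ l : List (Fml × Multiset Atom), (↑(l.map Prod.fst) : Multiset Fml) = Γ ∧
    (l.map Prod.snd).sum = L ∧ ∀ x ∈ l, Supp B x.2 x.1

/-- The official (Inf) clause: `Γ ⊩_B^L φ`, where `Γ = !Δ ⊎ Θ`. -/
def SuppSeq (B : Base) (L : Multiset Atom) (Γ : Multiset Fml) (φ : Fml) : Prop :=
  ∀ C : Base, B ⊆ C → ∀ K : Multiset Atom,
    SuppMS C 0 ((Γ.filter (fun ψ => isBang ψ = true)).map unbang) →
    SuppMS C K (Γ.filter (fun ψ => isBang ψ = false)) →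
    Supp C (L + K) φ

/-- Validity of a sequent `(Γ : φ)`. -/
def Valid (Γ : Multiset Fml) (φ : Fml) : Prop :=
  ∀ B : Base, SuppSeq B 0 Γ φ
/-- The natural deduction system N_ILL. -/
inductive NDeriv : Multiset Fml → Fml → Prop
  | ax (φ : Fml) : NDeriv {φ} φ
  | limpI {Γ : Multiset Fml} {φ ψ : Fml} :
      NDeriv (Γ + {φ}) ψ → NDeriv Γ (.limp φ ψ)
  | limpE {Γ Δ : Multiset Fml} {φ ψ : Fml} :
      NDeriv Γ (.limp φ ψ) → NDeriv Δ φ → NDeriv (Γ + Δ) ψ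
  | tensI {Γ Δ : Multiset Fml} {φ ψ : Fml} :
      NDeriv Γ φ → NDeriv Δ ψ → NDeriv (Γ + Δ) (.tens φ ψ)
  | tensE {Γ Δ : Multiset Fml} {φ ψ χ : Fml} :
      NDeriv Γ (.tens φ ψ) → NDeriv (Δ + {φ, ψ}) χ → NDeriv (Γ + Δ) χ
  | oneI : NDeriv 0 .one
  | oneE {Γ Δ : Multiset Fml} {φ : Fml} :
      NDeriv Γ .one → NDeriv Δ φ → NDeriv (Γ + Δ) φ
  | wthI {Γ : Multiset Fml} {φ ψ : Fml} :
      NDeriv Γ φ → NDeriv Γ ψ → NDeriv Γ (.wth φ ψ)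
  | wthE1 {Γ : Multiset Fml} {φ ψ : Fml} : NDeriv Γ (.wth φ ψ) → NDeriv Γ φ
  | wthE2 {Γ : Multiset Fml} {φ ψ : Fml} : NDeriv Γ (.wth φ ψ) → NDeriv Γ ψ
  | plusI1 {Γ : Multiset Fml} {φ ψ : Fml} : NDeriv Γ φ → NDeriv Γ (.plus φ ψ)
  | plusI2 {Γ : Multiset Fml} {φ ψ : Fml} : NDeriv Γ ψ → NDeriv Γ (.plus φ ψ)
  | plusE {Γ Δ : Multiset Fml} {φ ψ χ : Fml} :
      NDeriv Γ (.plus φ ψ) → NDeriv (Δ + {φ}) χ → NDeriv (Δ + {ψ}) χ →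
      NDeriv (Γ + Δ) χ
  | topI (l : List (Multiset Fml × Fml)) :
      (∀ x ∈ l, NDeriv x.1 x.2) → NDeriv (l.map Prod.fst).sum .top
  | zeroE {Δ : Multiset Fml} {χ : Fml} (l : List (Multiset Fml × Fml)) :
      (∀ x ∈ l, NDeriv x.1 x.2) → NDeriv Δ .zero →
      NDeriv ((l.map Prod.fst).sum + Δ) χ
  | prom {φ : Fml} (l : List (Multiset Fml × Fml)) :
      (∀ x ∈ l, NDeriv x.1 (.bang x.2)) →
      NDeriv (↑(l.map (fun x => Fml.bang x.2)) : Multiset Fml) φ →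
      NDeriv (l.map Prod.fst).sum (.bang φ)
  | der {Γ Δ : Multiset Fml} {φ ψ : Fml} :
      NDeriv Γ (.bang φ) → NDeriv (Δ + {φ}) ψ → NDeriv (Γ + Δ) ψ
  | wk {Γ Δ : Multiset Fml} {φ ψ : Fml} :
      NDeriv Γ (.bang φ) → NDeriv Δ ψ → NDeriv (Γ + Δ) ψ
  | ctr {Γ Δ : Multiset Fml} {φ ψ : Fml} :
      NDeriv Γ (.bang φ) → NDeriv (Δ + {.bang φ, .bang φ}) ψ → NDeriv (Γ + Δ) ψ
/-- The set of subformulas of a formula. -/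
def subf : Fml → Set Fml
  | .atom p => {.atom p}
  | .top => {.top}
  | .zero => {.zero}
  | .one => {.one}
  | .limp φ ψ => insert (.limp φ ψ) (subf φ ∪ subf ψ)
  | .tens φ ψ => insert (.tens φ ψ) (subf φ ∪ subf ψ)
  | .wth φ ψ => insert (.wth φ ψ) (subf φ ∪ subf ψ)
  | .plus φ ψ => insert (.plus φ ψ) (subf φ ∪ subf ψ)
  | .bang φ => insert (.bang φ) (subf φ)

/-- The set of subformulas of a sequent `(Γ : φ)`. -/
def subfSeq (Γ : Multiset Fml) (φ : Fml) : Set Fml :=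
  subf φ ∪ {ψ | ∃ γ ∈ Γ, ψ ∈ subf γ}

/-- The simulation base `N`, built from a flattening map `f` over the set `Ξ`. -/
def SimBase (Ξ : Set Fml) (f : Fml → Atom) : Base :=
  { r |
    -- ⊸I
    (∃ φ ∈ Ξ, ∃ ψ ∈ Ξ, r = ({({({f φ}, f ψ)} : Box)}, (0 : Box), f (.limp φ ψ))) ∨
    -- ⊸E
    (∃ φ ∈ Ξ, ∃ ψ ∈ Ξ, r = ({({((0 : Multiset Atom), f (.limp φ ψ))} : Box),
        ({((0 : Multiset Atom), f φ)} : Box)}, (0 : Box), f ψ)) ∨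
    -- ⊗I
    (∃ φ ∈ Ξ, ∃ ψ ∈ Ξ, r = ({({((0 : Multiset Atom), f φ)} : Box),
        ({((0 : Multiset Atom), f ψ)} : Box)}, (0 : Box), f (.tens φ ψ))) ∨
    -- ⊗E
    (∃ φ ∈ Ξ, ∃ ψ ∈ Ξ, ∃ p : Atom, r = ({({((0 : Multiset Atom), f (.tens φ ψ))} : Box),
        ({(({f φ, f ψ} : Multiset Atom), p)} : Box)}, (0 : Box), p)) ∨
    -- 1I
    (r = ((0 : Multiset Box), (0 : Box), f .one)) ∨
    -- 1E
    (∃ p : Atom, r = ({({((0 : Multiset Atom), f .one)} : Box),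
        ({((0 : Multiset Atom), p)} : Box)}, (0 : Box), p)) ∨
    -- &I
    (∃ φ ∈ Ξ, ∃ ψ ∈ Ξ, r = ({({((0 : Multiset Atom), f φ),
        ((0 : Multiset Atom), f ψ)} : Box)}, (0 : Box), f (.wth φ ψ))) ∨
    -- &E1, &E2
    (∃ φ ∈ Ξ, ∃ ψ ∈ Ξ, r = ({({((0 : Multiset Atom), f (.wth φ ψ))} : Box)}, (0 : Box), f φ)) ∨
    (∃ φ ∈ Ξ, ∃ ψ ∈ Ξ, r = ({({((0 : Multiset Atom), f (.wth φ ψ))} : Box)}, (0 : Box), f ψ)) ∨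
    -- ⊕I1, ⊕I2
    (∃ φ ∈ Ξ, ∃ ψ ∈ Ξ, r = ({({((0 : Multiset Atom), f φ)} : Box)}, (0 : Box), f (.plus φ ψ))) ∨
    (∃ φ ∈ Ξ, ∃ ψ ∈ Ξ, r = ({({((0 : Multiset Atom), f ψ)} : Box)}, (0 : Box), f (.plus φ ψ))) ∨
    -- ⊕E
    (∃ φ ∈ Ξ, ∃ ψ ∈ Ξ, ∃ p : Atom, r = ({({((0 : Multiset Atom), f (.plus φ ψ))} : Box),
        ({(({f φ} : Multiset Atom), p), (({f ψ} : Multiset Atom), p)} : Box)}, (0 : Box), p)) ∨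
    -- ⊤I (one copy for each list of atoms)
    (∃ qs : List Atom, r = ((↑(qs.map (fun q => ({((0 : Multiset Atom), q)} : Box))) : Multiset Box),
        (0 : Box), f .top)) ∨
    -- 0E
    (∃ qs : List Atom, ∃ p : Atom,
      r = ((↑(qs.map (fun q => ({((0 : Multiset Atom), q)} : Box))) : Multiset Box) +
        {({((0 : Multiset Atom), f .zero)} : Box)}, (0 : Box), p)) ∨
    -- Prom
    (∃ φ ∈ Ξ, r = ((0 : Multiset Box), ({((0 : Multiset Atom), f φ)} : Box), f (.bang φ))) ∨
    -- Der
    (∃ φ ∈ Ξ, ∃ ψ ∈ Ξ, r = ({({((0 : Multiset Atom), f (.bang φ))} : Box),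
        ({(({f φ} : Multiset Atom), f ψ)} : Box)}, (0 : Box), f ψ)) ∨
    -- Wk
    (∃ φ ∈ Ξ, ∃ p : Atom, r = ({({((0 : Multiset Atom), f (.bang φ))} : Box),
        ({((0 : Multiset Atom), p)} : Box)}, (0 : Box), p)) ∨
    -- Ctr
    (∃ φ ∈ Ξ, ∃ p : Atom, r = ({({((0 : Multiset Atom), f (.bang φ))} : Box),
        ({(({f (.bang φ), f (.bang φ)} : Multiset Atom), p)} : Box)}, (0 : Box), p)) }


theorem Persistent.mono {B C : Base} (h : B ⊆ C) {d : Atom} : Persistent B d → Persistent C d := by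
  rintro ⟨S, hS, hr⟩; exact ⟨S, hS, h hr⟩

theorem Deriv.mono {B C : Base} (h : B ⊆ C) {L : Multiset Atom} {p : Atom}
    (hd : Deriv B L p) : Deriv C L p := by
  induction hd with
  | ref p => exact .ref p
  | app S p bc dc hrule hpers hbox hd hS ihbox ihd ihS =>
      exact .app S p bc dc (h hrule) (fun x hx => (hpers x hx).mono h) ihbox ihd ihS

theorem mem_sum_map {α : Type*} (g : α → Multiset Atom) (l : List α) (a : Atom)
    (h : a ∈ (l.map g).sum) : ∃ l1 x l2, l = l1 ++ x :: l2 ∧ a ∈ g x := by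
  induction l with
  | nil => simp at h
  | cons y l ih =>
      simp only [List.map_cons, List.sum_cons, Multiset.mem_add] at h
      rcases h with h | h
      · exact ⟨[], y, l, rfl, h⟩
      · obtain ⟨l1, x, l2, rfl, hx⟩ := ih h
        exact ⟨y :: l1, x, l2, rfl, hx⟩

theorem sum_split {α : Type*} (g : α → Multiset Atom) (l1 l2 : List α) (x : α) :
    ((l1 ++ x :: l2).map g).sum = (l1.map g).sum + g x + (l2.map g).sum := by
  simp [add_comm, add_assoc, add_left_comm]

theorem Deriv.cut {B : Base} {L : Multiset Atom} {p : Atom} (h : Deriv B L p) :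
    ∀ (q : Atom) (K M : Multiset Atom), L = q ::ₘ K → Deriv B M q → Deriv B (M + K) p := by
  induction h with
  | ref p =>
      intro q K M hL hM
      have : p = q ∧ K = 0 := by
        rw [Multiset.singleton_eq_cons_iff] at hL; exact hL
      rw [this.2, add_zero, this.1]; exact hM
  | app S p bc dc hrule hpers hbox hd hS ihbox ihd ihS =>
      intro q K M hL hM
      have hq : q ∈ (bc.map Prod.snd).sum + (dc.map Prod.snd).sum := by
        rw [hL]; exact Multiset.mem_cons_self q K
      rw [Multiset.mem_add] at hq
      rcases hq with hq | hq
      · obtain ⟨l1, x, l2, hsplit, hx⟩ := mem_sum_map Prod.snd bc q hq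
        set x' : Box × Multiset Atom := (x.1, M + x.2.erase q) with hx'
        have hK : K = (l1.map Prod.snd).sum + x.2.erase q + (l2.map Prod.snd).sum
            + (dc.map Prod.snd).sum := by
          have := hL
          rw [hsplit, sum_split, ← Multiset.cons_erase hx] at this
          have h2 : q ::ₘ K = q ::ₘ ((l1.map Prod.snd).sum + x.2.erase q + (l2.map Prod.snd).sum
            + (dc.map Prod.snd).sum) := by
            rw [← this]; simp only [← Multiset.singleton_add]; abel
          exact (Multiset.cons_inj_right q).mp h2
        have goal_eq : M + K = ((l1 ++ x' :: l2).map Prod.snd).sum + (dc.map Prod.snd).sum := by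
          rw [hK, sum_split]; simp only [hx']; abel
        rw [goal_eq, show (l1 ++ x' :: l2 : List (Box × Multiset Atom)) = l1 ++ x' :: l2 from rfl]
        subst hsplit
        refine Deriv.app S p (l1 ++ x' :: l2) dc ?_ hpers ?_ hd hS
        · have : (l1 ++ x' :: l2).map Prod.fst = (l1 ++ x :: l2).map Prod.fst := by
            simp [hx']
          rw [this]; exact hrule
        · intro y hy s hs
          rw [List.mem_append, List.mem_cons] at hy
          rcases hy with hy | hy | hy
          · exact hbox y (by simp [hy]) s hs
          · subst hy
            have := ihbox x (by simp) s hs q (x.2.erase q + s.1) M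
              (by rw [← Multiset.cons_erase hx]; simp [Multiset.cons_add, add_assoc]) hM
            simpa [hx', add_assoc] using this
          · exact hbox y (by simp [hy]) s hs
      · obtain ⟨l1, x, l2, hsplit, hx⟩ := mem_sum_map Prod.snd dc q hq
        set x' : Atom × Multiset Atom := (x.1, M + x.2.erase q) with hx'
        have hK : K = (bc.map Prod.snd).sum + ((l1.map Prod.snd).sum + x.2.erase q
            + (l2.map Prod.snd).sum) := by
          have := hL
          rw [hsplit, sum_split, ← Multiset.cons_erase hx] at this
          have h2 : q ::ₘ K = q ::ₘ ((bc.map Prod.snd).sum + ((l1.map Prod.snd).sum + x.2.erase q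
            + (l2.map Prod.snd).sum)) := by
            rw [← this]; simp only [← Multiset.singleton_add]; abel
          exact (Multiset.cons_inj_right q).mp h2
        have goal_eq : M + K = (bc.map Prod.snd).sum + ((l1 ++ x' :: l2).map Prod.snd).sum := by
          rw [hK, sum_split]; simp only [hx']; abel
        rw [goal_eq]
        subst hsplit
        have hfst : (l1 ++ x' :: l2).map Prod.fst = (l1 ++ x :: l2).map Prod.fst := by
          simp [hx']
        refine Deriv.app S p bc (l1 ++ x' :: l2) hrule ?_ hbox ?_ ?_
        · intro y hy
          rw [List.mem_append, List.mem_cons] at hy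
          rcases hy with hy | hy | hy
          · exact hpers y (by simp [hy])
          · subst hy; exact hpers x (by simp)
          · exact hpers y (by simp [hy])
        · intro y hy
          rw [List.mem_append, List.mem_cons] at hy
          rcases hy with hy | hy | hy
          · exact hd y (by simp [hy])
          · subst hy
            have := ihd x (by simp) q (x.2.erase q) M (Multiset.cons_erase hx).symm hM
            simpa [hx'] using this
          · exact hd y (by simp [hy])
        · intro s hs
          have : ((l1 ++ x' :: l2).map Prod.fst : Multiset Atom) = ((l1 ++ x :: l2).map Prod.fst : Multiset Atom) := by
            rw [hfst]
          rw [this]; exact hS s hs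

theorem deriv_wk {B : Base} {d q : Atom} {M : Multiset Atom}
    (hr : (({({((0:Multiset Atom),d)}:Box), ({((0:Multiset Atom),q)}:Box)} : Multiset Box),
      (0:Box), q) ∈ B)
    (h : Deriv B M q) : Deriv B (d ::ₘ M) q := by
  have := Deriv.app (B := B) 0 q
    [(({((0:Multiset Atom),d)}:Box), ({d} : Multiset Atom)), (({((0:Multiset Atom),q)}:Box), M)]
    [] (by exact hr) (by simp)
    (by
      rintro x hx s hs
      simp only [List.mem_cons, List.not_mem_nil, or_false] at hx
      rcases hx with rfl | rfl <;> simp only [Multiset.mem_singleton] at hs <;> subst hs <;> simp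
      · exact Deriv.ref d
      · exact h)
    (by simp) (by simp)
  simpa [Multiset.singleton_add] using this

theorem deriv_ctr {B : Base} {d q : Atom} {M : Multiset Atom}
    (hr : (({({((0:Multiset Atom),d)}:Box),
      ({(({d,d}:Multiset Atom),q)}:Box)} : Multiset Box), (0:Box), q) ∈ B)
    (h : Deriv B (d ::ₘ d ::ₘ M) q) : Deriv B (d ::ₘ M) q := by
  have := Deriv.app (B := B) 0 q
    [(({((0:Multiset Atom),d)}:Box), ({d} : Multiset Atom)),
     (({(({d,d}:Multiset Atom),q)}:Box), M)]
    [] (by exact hr) (by simp)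
    (by
      rintro x hx s hs
      simp only [List.mem_cons, List.not_mem_nil, or_false] at hx
      rcases hx with rfl | rfl <;> simp only [Multiset.mem_singleton] at hs <;> subst hs <;> simp
      · exact Deriv.ref d
      · have e : (d ::ₘ (M + {d}) : Multiset Atom) = d ::ₘ d ::ₘ M := by
          simp only [← Multiset.singleton_add]; abel
        rw [e]; exact h)
    (by simp) (by simp)
  simpa [Multiset.singleton_add] using this

theorem deriv_ctr_rep {B : Base} {d : Atom}
    (hr : ∀ q : Atom, (({({((0:Multiset Atom),d)}:Box),
      ({(({d,d}:Multiset Atom),q)}:Box)} : Multiset Box), (0:Box), q) ∈ B) :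
    ∀ (n : ℕ) (L : Multiset Atom) (q : Atom),
      Deriv B (Multiset.replicate (n+1) d + L) q → Deriv B (d ::ₘ L) q := by
  intro n
  induction n with
  | zero => intro L q h; simpa [Multiset.replicate_succ, Multiset.cons_add] using h
  | succ m ih =>
      intro L q h
      apply ih
      rw [show Multiset.replicate (m+1) d + L = d ::ₘ (Multiset.replicate m d + L) by
        simp [Multiset.replicate_succ, Multiset.cons_add]]
      apply deriv_ctr (hr q)
      rw [show (d ::ₘ d ::ₘ (Multiset.replicate m d + L)) =
        Multiset.replicate (m+1+1) d + L by simp [Multiset.replicate_succ, Multiset.cons_add]]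
      exact h

theorem sum_map_cons {α : Type*} (d : Atom) (g : α → Multiset Atom) (l : List α) :
    (l.map (fun x => d ::ₘ g x)).sum = Multiset.replicate l.length d + (l.map g).sum := by
  induction l with
  | nil => simp
  | cons y l ih =>
      simp only [List.map_cons, List.sum_cons, ih, List.length_cons, Multiset.replicate_succ,
        Multiset.cons_add]
      simp only [← Multiset.singleton_add]; abel

theorem remove_axiom {B : Base} {d a : Atom}
    (hwk : ∀ q : Atom, (({({((0:Multiset Atom),d)}:Box), ({((0:Multiset Atom),q)}:Box)} :
      Multiset Box), (0:Box), q) ∈ B)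
    (hctr : ∀ q : Atom, (({({((0:Multiset Atom),d)}:Box),
      ({(({d,d}:Multiset Atom),q)}:Box)} : Multiset Box), (0:Box), q) ∈ B)
    (hder : (({({((0:Multiset Atom),d)}:Box), ({(({a}:Multiset Atom),a)}:Box)} :
      Multiset Box), (0:Box), a) ∈ B)
    (hpd : Persistent B d)
    {L : Multiset Atom} {q : Atom}
    (h : Deriv (insert ((0 : Multiset Box), (0 : Box), a) B) L q) : Deriv B (d ::ₘ L) q := by
  set r0 : ARule := ((0 : Multiset Box), (0 : Box), a) with hr0
  induction h with
  | ref p => exact deriv_wk (hwk p) (Deriv.ref p)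
  | app S p bc dc hrule hpers hbox hd hS ihbox ihd ihS =>
      have hpers' : ∀ x ∈ dc, Persistent B x.1 := by
        intro x hx
        obtain ⟨S', hS'0, hmem⟩ := hpers x hx
        rcases Set.mem_insert_iff.mp hmem with heq | hmem
        · exfalso; apply hS'0
          have := (Prod.ext_iff.mp heq).2
          exact (Prod.ext_iff.mp this).1
        · exact ⟨S', hS'0, hmem⟩
      set dc' : List (Atom × Multiset Atom) := dc.map (fun x => (x.1, d ::ₘ x.2)) with hdc'
      have hdc'snd : (dc'.map Prod.snd).sum
          = Multiset.replicate dc.length d + (dc.map Prod.snd).sum := by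
        rw [hdc', List.map_map]
        have : (Prod.snd ∘ fun x : Atom × Multiset Atom => (x.1, d ::ₘ x.2))
            = fun x : Atom × Multiset Atom => d ::ₘ x.2 := rfl
        rw [this, sum_map_cons d (fun x => x.2) dc]
      have hdc'mem : ∀ y ∈ dc', ∃ x ∈ dc, y = (x.1, d ::ₘ x.2) := by
        intro y hy
        obtain ⟨x, hx, rfl⟩ := List.mem_map.mp hy
        exact ⟨x, hx, rfl⟩
      rcases Set.mem_insert_iff.mp hrule with heq | hmem
      · -- the axiom rule r0 was used
        have h1 := Prod.ext_iff.mp heq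
        have h2 := Prod.ext_iff.mp h1.2
        have hbce : (↑(bc.map Prod.fst) : Multiset Box) = 0 := h1.1
        have hSe : S = (0 : Box) := h2.1
        have hpe : p = a := h2.2
        have hbcnil : bc = [] := by
          exact List.map_eq_nil_iff.mp ((Multiset.coe_eq_zero _).mp hbce)
        subst hbcnil; subst hSe
        rw [hpe]
        have happ := Deriv.app (B := B) 0 a
          [(({((0:Multiset Atom),d)}:Box), ({d} : Multiset Atom)),
           (({(({a}:Multiset Atom),a)}:Box), (0 : Multiset Atom))]
          dc' (by exact hder)
          (by
            intro y hy
            obtain ⟨x, hx, rfl⟩ := hdc'mem y hy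
            exact hpers' x hx)
          (by
            rintro x hx s hs
            simp only [List.mem_cons, List.not_mem_nil, or_false] at hx
            rcases hx with rfl | rfl
            · simp only [Multiset.mem_singleton] at hs; subst hs
              simpa using Deriv.ref d
            · simp only [Multiset.mem_singleton] at hs; subst hs
              simpa using Deriv.ref a)
          (by
            intro y hy
            obtain ⟨x, hx, rfl⟩ := hdc'mem y hy
            exact ihd x hx)
          (by intro s hs; simp at hs)
        have hctx : (([(({((0:Multiset Atom),d)}:Box), ({d} : Multiset Atom)),
           (({(({a}:Multiset Atom),a)}:Box), (0 : Multiset Atom))].map Prod.snd).sum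
             + (dc'.map Prod.snd).sum)
            = Multiset.replicate (dc.length + 1) d + ((0:Multiset Atom) + (dc.map Prod.snd).sum) := by
          rw [hdc'snd, Multiset.replicate_add]
          simp only [List.map_cons, List.map_nil, List.sum_cons, List.sum_nil,
            Multiset.replicate_one, ← Multiset.singleton_add]
          abel
        rw [hctx] at happ
        have := deriv_ctr_rep hctr dc.length _ a happ
        simpa using this
      · -- a genuine rule of B
        set bc' : List (Box × Multiset Atom) := bc.map (fun x => (x.1, d ::ₘ x.2)) with hbc'
        have hbc'fst : bc'.map Prod.fst = bc.map Prod.fst := by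
          rw [hbc', List.map_map]; rfl
        have hbc'snd : (bc'.map Prod.snd).sum
            = Multiset.replicate bc.length d + (bc.map Prod.snd).sum := by
          rw [hbc', List.map_map]
          have : (Prod.snd ∘ fun x : Box × Multiset Atom => (x.1, d ::ₘ x.2))
              = fun x : Box × Multiset Atom => d ::ₘ x.2 := rfl
          rw [this, sum_map_cons d (fun x => x.2) bc]
        have hbc'mem : ∀ y ∈ bc', ∃ x ∈ bc, y = (x.1, d ::ₘ x.2) := by
          intro y hy
          obtain ⟨x, hx, rfl⟩ := List.mem_map.mp hy
          exact ⟨x, hx, rfl⟩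
        set dc'' : List (Atom × Multiset Atom) := (d, ({d} : Multiset Atom)) :: dc' with hdc''
        have happ := Deriv.app (B := B) S p bc' dc''
          (by rw [hbc'fst]; exact hmem)
          (by
            intro y hy
            rcases List.mem_cons.mp hy with rfl | hy
            · exact hpd
            · obtain ⟨x, hx, rfl⟩ := hdc'mem y hy
              exact hpers' x hx)
          (by
            intro y hy s hs
            obtain ⟨x, hx, rfl⟩ := hbc'mem y hy
            have := ihbox x hx s hs
            simpa [Multiset.cons_add] using this)
          (by
            intro y hy
            rcases List.mem_cons.mp hy with rfl | hy
            · exact Deriv.ref d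
            · obtain ⟨x, hx, rfl⟩ := hdc'mem y hy
              exact ihd x hx)
          (by
            intro s hs
            have e1 : dc''.map Prod.fst = d :: dc.map Prod.fst := by
              rw [hdc'', hdc', List.map_cons, List.map_map]; rfl
            have : (↑(dc''.map Prod.fst) : Multiset Atom) + s.1
                = d ::ₘ ((↑(dc.map Prod.fst) : Multiset Atom) + s.1) := by
              rw [e1]
              simp [← Multiset.cons_coe, Multiset.cons_add]
            rw [this]
            exact ihS s hs)
        have hctx : ((bc'.map Prod.snd).sum + (dc''.map Prod.snd).sum)
            = Multiset.replicate (bc.length + dc.length + 1) d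
              + ((bc.map Prod.snd).sum + (dc.map Prod.snd).sum) := by
          rw [hbc'snd, hdc'']
          simp only [List.map_cons, List.sum_cons, hdc'snd]
          rw [Multiset.replicate_add, Multiset.replicate_add]
          simp only [Multiset.replicate_one, ← Multiset.singleton_add]
          abel
        rw [hctx] at happ
        exact deriv_ctr_rep hctr (bc.length + dc.length) _ p happ

theorem structural_cut_for_simulated_bang (Γ0 : Multiset Fml) (φ0 : Fml)
    (f : Fml → Atom)
    (hatom : ∀ q : Atom, f (.atom q) = q)
    (hinj : ∀ φ ∈ subfSeq Γ0 φ0, ∀ ψ ∈ subfSeq Γ0 φ0, f φ = f ψ → φ = ψ)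
    (hfresh : ∀ φ ∈ subfSeq Γ0 φ0, (∀ q : Atom, φ ≠ .atom q) → Fml.atom (f φ) ∉ subfSeq Γ0 φ0)
    (B : Base) (hB : SimBase (subfSeq Γ0 φ0) f ⊆ B)
    (p : Atom) (K : Multiset Atom) (φ : Fml) (hφ : φ ∈ subfSeq Γ0 φ0) :
    Deriv B ({f (.bang φ)} + K) p ↔
      ∀ C : Base, B ⊆ C → Deriv C 0 (f φ) → Deriv C K p := by

  set d : Atom := f (.bang φ) with hd
  have hwkB : ∀ q : Atom, (({({((0:Multiset Atom), d)}:Box),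
      ({((0:Multiset Atom), q)}:Box)} : Multiset Box), (0:Box), q) ∈ B := fun q =>
    hB (Or.inr <| Or.inr <| Or.inr <| Or.inr <| Or.inr <| Or.inr <| Or.inr <| Or.inr <|
      Or.inr <| Or.inr <| Or.inr <| Or.inr <| Or.inr <| Or.inr <| Or.inr <| Or.inr <|
      Or.inl ⟨φ, hφ, q, rfl⟩)
  have hctrB : ∀ q : Atom, (({({((0:Multiset Atom), d)}:Box),
      ({(({d,d}:Multiset Atom), q)}:Box)} : Multiset Box), (0:Box), q) ∈ B := fun q =>
    hB (Or.inr <| Or.inr <| Or.inr <| Or.inr <| Or.inr <| Or.inr <| Or.inr <| Or.inr <|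
      Or.inr <| Or.inr <| Or.inr <| Or.inr <| Or.inr <| Or.inr <| Or.inr <| Or.inr <|
      Or.inr ⟨φ, hφ, q, rfl⟩)
  have hderB : (({({((0:Multiset Atom), d)}:Box),
      ({(({f φ}:Multiset Atom), f φ)}:Box)} : Multiset Box), (0:Box), f φ) ∈ B :=
    hB (Or.inr <| Or.inr <| Or.inr <| Or.inr <| Or.inr <| Or.inr <| Or.inr <| Or.inr <|
      Or.inr <| Or.inr <| Or.inr <| Or.inr <| Or.inr <| Or.inr <| Or.inr <|
      Or.inl ⟨φ, hφ, φ, hφ, rfl⟩)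
  have hpromB : ((0 : Multiset Box), ({((0:Multiset Atom), f φ)} : Box), d) ∈ B :=
    hB (Or.inr <| Or.inr <| Or.inr <| Or.inr <| Or.inr <| Or.inr <| Or.inr <| Or.inr <|
      Or.inr <| Or.inr <| Or.inr <| Or.inr <| Or.inr <| Or.inr <| Or.inl ⟨φ, hφ, rfl⟩)
  have hpd : Persistent B d := ⟨{((0:Multiset Atom), f φ)}, by simp, hpromB⟩
  constructor
  · intro h C hBC hfφ
    have hbang : Deriv C 0 d := by
      have := Deriv.app (B := C) ({((0:Multiset Atom), f φ)} : Box) d [] []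
        (by simpa using hBC hpromB) (by simp) (by simp) (by simp)
        (by
          intro s hs
          simp only [Multiset.mem_singleton] at hs
          subst hs
          simpa using hfφ)
      simpa using this
    have h' : Deriv C (d ::ₘ K) p := by
      have := h.mono hBC
      rwa [Multiset.singleton_add] at this
    have := h'.cut d K 0 rfl hbang
    simpa using this
  · intro h
    set r0 : ARule := ((0 : Multiset Box), (0 : Box), f φ) with hr0
    have hax : Deriv (insert r0 B) 0 (f φ) := by
      have := Deriv.app (B := insert r0 B) (0 : Box) (f φ) [] []
        (by
          refine Set.mem_insert_iff.mpr (Or.inl ?_)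
          simp [hr0])
        (by simp) (by simp) (by simp) (by intro s hs; simp at hs)
      simpa using this
    have hKp : Deriv (insert r0 B) K p := h _ (Set.subset_insert r0 B) hax
    have := remove_axiom hwkB hctrB hderB hpd hKp
    rwa [Multiset.singleton_add]
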